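/- For every integer D ≥ 2, every integer n ≥ 1, and all complex numbers g_1, …, g_D with |g_i| < (D−1)^{D−1}/D^{D} for each i, the family (p_1, …, p_D) ↦ C^n_{p_1…p_D} · ∏_{i=1}^{D} g_i^{p_i} indexed by ℕ^D is absolutely summable; in particular the sum F_n(g_1,…,g_D) = ∑_{(p_1,…,p_D) ∈ ℕ^D} C^n_{p_1…p_D} ∏_i g_i^{p_i} is well defined. -/
import Mathlib


/-- The complex number `Cⁿ_{p₁…p_D} = (n/(p₁+⋯+p_D+n)) · ∏_j binom(p₁+⋯+p_D+n, p_j)`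
(for `n ≥ 1`). -/
noncomputable def Ccoef (D n : ℕ) (p : Fin D → ℕ) : ℂ :=
  (n : ℂ) / ((∑ i, p i : ℕ) + n) * ∏ j, ((∑ i, p i + n).choose (p j) : ℂ)

lemma choose_le_bound {x : ℝ} (h0 : 0 < x) (h1 : x < 1) (m k : ℕ) (hk : k ≤ m) :
    (m.choose k : ℝ) ≤ (1 / x) ^ k * (1 / (1 - x)) ^ (m - k) := by
  have h1x : 0 < 1 - x := by linarith
  rw [one_div, one_div, inv_pow, inv_pow, ← mul_inv, ← one_div,
    le_div_iff₀ (by positivity)]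
  have h := add_pow x (1 - x) m
  have hsum : ∑ j ∈ Finset.range (m+1), x ^ j * (1-x) ^ (m-j) * ((m.choose j : ℕ) : ℝ) = 1 := by
    have hx1 : x + (1 - x) = 1 := by ring
    rw [hx1, one_pow] at h; exact h.symm
  have hterm : x ^ k * (1-x) ^ (m-k) * (m.choose k) ≤
      ∑ j ∈ Finset.range (m+1), x ^ j * (1-x) ^ (m-j) * (m.choose j) :=
    Finset.single_le_sum (f := fun j => x ^ j * (1-x) ^ (m-j) * ((m.choose j : ℕ) : ℝ))
      (fun j _ => by positivity)
      (Finset.mem_range.mpr (Nat.lt_succ_of_le hk))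
  calc (m.choose k : ℝ) * (x ^ k * (1-x) ^ (m-k))
      = x ^ k * (1-x) ^ (m-k) * (m.choose k) := by ring
    _ ≤ _ := hterm
    _ = 1 := hsum

lemma summable_pi_geom : ∀ (D : ℕ) (q : Fin D → ℝ), (∀ i, 0 ≤ q i) → (∀ i, q i < 1) →
    Summable (fun p : Fin D → ℕ => ∏ i, q i ^ p i) := by
  intro D
  induction D with
  | zero =>
    intro q _ _
    have : Finite (Fin 0 → ℕ) := Finite.of_subsingleton
    exact Summable.of_finite
  | succ D ih =>
    intro q h0 h1
    refine ((Fin.consEquiv (fun _ : Fin (D+1) => ℕ)).summable_iff).mp ?_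
    have hbase : Summable (fun x : ℕ × (Fin D → ℕ) => q 0 ^ x.1 * ∏ i : Fin D, q i.succ ^ x.2 i) :=
      Summable.mul_of_nonneg (f := fun m : ℕ => q 0 ^ m)
        (g := fun p : Fin D → ℕ => ∏ i, q i.succ ^ p i)
        (summable_geometric_of_lt_one (h0 0) (h1 0))
        (ih (fun i => q i.succ) (fun i => h0 _) (fun i => h1 _))
        (fun x => pow_nonneg (h0 0) x)
        (fun x => Finset.prod_nonneg fun i _ => pow_nonneg (h0 _) _)
    refine hbase.congr fun x => ?_
    simp [Fin.consEquiv, Fin.prod_univ_succ, Fin.cons_zero, Fin.cons_succ]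

lemma ccoef_bound (d n : ℕ) (g : Fin (d+2) → ℂ) (p : Fin (d+2) → ℕ) :
    ‖Ccoef (d+2) n p * ∏ i, g i ^ p i‖ ≤
      (((d:ℝ)+2)/((d:ℝ)+1))^((d+2)*n) *
        ∏ i, ((((d:ℝ)+2)^(d+2)/((d:ℝ)+1)^(d+1)) * ‖g i‖)^(p i) := by
  have hd0 : (0:ℝ) ≤ (d:ℝ) := Nat.cast_nonneg d
  obtain ⟨c, hc⟩ : ∃ c : ℝ, c = ((d:ℝ)+2)/((d:ℝ)+1) := ⟨_, rfl⟩
  have hc0 : 0 < c := by rw [hc]; positivity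
  rw [Ccoef]
  obtain ⟨S, hSdef⟩ : ∃ S : ℕ, S = ∑ i, p i := ⟨_, rfl⟩
  rw [← hSdef]
  have hpS : ∀ j, p j ≤ S + n := fun j => le_trans
    (hSdef ▸ Finset.single_le_sum (f := p) (fun i _ => Nat.zero_le _) (Finset.mem_univ j))
    (Nat.le_add_right _ _)
  -- step 1 : norm of the fraction
  have hfrac : ‖(n:ℂ)/(((S:ℕ):ℂ) + n)‖ ≤ 1 := by
    have hcast : ((S:ℕ):ℂ) + n = ((S+n:ℕ):ℂ) := by push_cast; ring
    rw [hcast, norm_div, Complex.norm_natCast, Complex.norm_natCast]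
    apply div_le_one_of_le₀ (by exact_mod_cast Nat.le_add_left n S) (by positivity)
  -- step 2 : binomial bound
  have hchoose : ∀ j : Fin (d+2), (((S+n).choose (p j)) : ℝ) ≤
      ((d:ℝ)+2)^(p j) * c^(S+n-p j) := by
    intro j
    have hx0 : (0:ℝ) < 1/((d:ℝ)+2) := by positivity
    have hx1 : 1/((d:ℝ)+2) < 1 := by
      rw [div_lt_one (by positivity)]; linarith
    have hb := choose_le_bound hx0 hx1 (S+n) (p j) (hpS j)
    have e1 : 1/(1/((d:ℝ)+2)) = (d:ℝ)+2 := one_div_one_div _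
    have e2 : (1:ℝ) - 1/((d:ℝ)+2) = ((d:ℝ)+1)/((d:ℝ)+2) := by
      field_simp
      ring
    rw [e1, e2, one_div_div, ← hc] at hb
    exact hb
  -- step 3 : exponent computation
  have hexp : ∑ j : Fin (d+2), (S + n - p j) = (d+1)*S + (d+2)*n := by
    have h1 : ∑ j : Fin (d+2), (S + n - p j) + ∑ j : Fin (d+2), p j
        = ∑ j : Fin (d+2), (S+n) := by
      rw [← Finset.sum_add_distrib]
      exact Finset.sum_congr rfl fun j _ => by have := hpS j; omega
    rw [← hSdef] at h1
    rw [Finset.sum_const, Finset.card_univ, Fintype.card_fin, smul_eq_mul] at h1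
    have h2 : (d+2)*(S+n) = ((d+1)*S + (d+2)*n) + S := by ring
    rw [h2] at h1
    exact Nat.add_right_cancel h1
  have hprod : ∏ j : Fin (d+2), (((d:ℝ)+2)^(p j) * c^(S+n-p j))
      = ((d:ℝ)+2)^S * c^((d+1)*S + (d+2)*n) := by
    rw [Finset.prod_mul_distrib, Finset.prod_pow_eq_pow_sum, Finset.prod_pow_eq_pow_sum,
      ← hSdef, hexp]
  -- step 4 : rewrite the target product
  have hR : ((d:ℝ)+2)^(d+2)/((d:ℝ)+1)^(d+1) = ((d:ℝ)+2) * c^(d+1) := by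
    rw [hc, div_pow]
    field_simp
    ring
  have htarget : ∏ i : Fin (d+2), ((((d:ℝ)+2)^(d+2)/((d:ℝ)+1)^(d+1)) * ‖g i‖)^(p i)
      = ((d:ℝ)+2)^S * c^((d+1)*S) * ∏ i, ‖g i‖ ^ (p i) := by
    rw [hR]
    simp only [mul_pow]
    rw [Finset.prod_mul_distrib, Finset.prod_mul_distrib,
      Finset.prod_pow_eq_pow_sum, Finset.prod_pow_eq_pow_sum, ← hSdef, ← pow_mul]
  -- combine
  have hnorm : ‖(n:ℂ)/(((S:ℕ):ℂ) + n) * (∏ j, ((((S+n).choose (p j)) : ℕ) : ℂ))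
        * ∏ i, g i ^ p i‖ =
      ‖(n:ℂ)/(((S:ℕ):ℂ) + n)‖ * ((∏ j, ((((S+n).choose (p j)) : ℕ) : ℝ)) * ∏ i, ‖g i‖ ^ p i) := by
    simp only [norm_mul, norm_prod, norm_pow, Complex.norm_natCast, mul_assoc]
  rw [hnorm, show (((d:ℝ)+2)/((d:ℝ)+1)) = c from hc.symm, htarget]
  have hgnn : (0:ℝ) ≤ ∏ i, ‖g i‖ ^ p i := Finset.prod_nonneg fun i _ => by positivity
  calc ‖(n:ℂ)/(((S:ℕ):ℂ) + n)‖ * ((∏ j, ((((S+n).choose (p j)) : ℕ) : ℝ)) * ∏ i, ‖g i‖ ^ p i)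
      ≤ 1 * ((∏ j : Fin (d+2), (((d:ℝ)+2)^(p j) * c^(S+n-p j))) * ∏ i, ‖g i‖ ^ p i) := by
        apply mul_le_mul hfrac _
          (mul_nonneg (Finset.prod_nonneg fun j _ => Nat.cast_nonneg _) hgnn) zero_le_one
        apply mul_le_mul_of_nonneg_right _ hgnn
        exact Finset.prod_le_prod (fun j _ => Nat.cast_nonneg _) (fun j _ => hchoose j)
    _ = c^((d+2)*n) * (((d:ℝ)+2)^S * c^((d+1)*S) * ∏ i, ‖g i‖ ^ p i) := by
        rw [one_mul, hprod, pow_add]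
        ring

theorem summable_Fn_family (D : ℕ) (hD : 2 ≤ D) (n : ℕ) (hn : 1 ≤ n)
    (g : Fin D → ℂ) (hg : ∀ i, ‖g i‖ < ((D : ℝ) - 1) ^ (D - 1) / (D : ℝ) ^ D) :
    Summable (fun p : Fin D → ℕ => ‖Ccoef D n p * ∏ i, g i ^ p i‖) ∧
    Summable (fun p : Fin D → ℕ => Ccoef D n p * ∏ i, g i ^ p i) := by
  obtain ⟨d, rfl⟩ : ∃ d, D = d + 2 := ⟨D - 2, by omega⟩
  have hd0 : (0:ℝ) ≤ (d:ℝ) := Nat.cast_nonneg d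
  set q : Fin (d+2) → ℝ := fun i => (((d:ℝ)+2)^(d+2)/((d:ℝ)+1)^(d+1)) * ‖g i‖ with hq
  have hq0 : ∀ i, 0 ≤ q i := fun i => by positivity
  have hq1 : ∀ i, q i < 1 := by
    intro i
    have hgi := hg i
    have hcast : ((d+2:ℕ):ℝ) - 1 = (d:ℝ) + 1 := by push_cast; ring
    have hcast2 : ((d+2:ℕ):ℝ) = (d:ℝ) + 2 := by push_cast; ring
    have hsub : (d+2) - 1 = d + 1 := rfl
    rw [hcast, hcast2, hsub] at hgi
    have hRpos : (0:ℝ) < ((d:ℝ)+2)^(d+2)/((d:ℝ)+1)^(d+1) := by positivity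
    have := mul_lt_mul_of_pos_left hgi hRpos
    have heq : ((d:ℝ)+2)^(d+2)/((d:ℝ)+1)^(d+1) * (((d:ℝ)+1)^(d+1)/((d:ℝ)+2)^(d+2)) = 1 := by
      rw [div_mul_div_comm, div_eq_one_iff_eq (by positivity)]
      ring
    rw [heq] at this
    exact this
  have hbase : Summable (fun p : Fin (d+2) → ℕ => ∏ i, q i ^ p i) :=
    summable_pi_geom (d+2) q hq0 hq1
  have hsum : Summable (fun p : Fin (d+2) → ℕ =>
      (((d:ℝ)+2)/((d:ℝ)+1))^((d+2)*n) * ∏ i, q i ^ p i) := hbase.mul_left _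
  have h1 : Summable (fun p : Fin (d+2) → ℕ => ‖Ccoef (d+2) n p * ∏ i, g i ^ p i‖) := by
    apply Summable.of_nonneg_of_le (fun p => norm_nonneg _) _ hsum
    intro p
    exact ccoef_bound d n g p
  exact ⟨h1, Summable.of_norm h1⟩
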